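/- Let n ≥ 1 and k ≥ 0 be integers and x > 0. Then T_{n+1,k−1}(x)·P_{n+1,k−1}(x) + T_{n+1,k}(x)·P_{n+1,k}(x) = (k−2)(n+k−1)·P_{n+1,k−2}(x) − (k−1)(n+k)·P_{n+1,k−1}(x) − k(n+k+1)·P_{n+1,k}(x) + (k+1)(n+k+2)·P_{n+1,k+1}(x), where terms with negative second index are interpreted as 0. -/

import Mathlib

open MeasureTheory Filter Set

/-- Baskakov basis functions `P_{n,k}(x)`, with `P_{n,k} := 0` for `k < 0`. -/
noncomputable def P (n : ℕ) (k : ℤ) (x : ℝ) : ℝ :=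
  if k < 0 then 0
  else (Nat.choose (n + k.toNat - 1) k.toNat : ℝ) * x ^ k.toNat * (1 + x) ^ (-(n : ℤ) - k)

/-- The weight `ψ(x) = x(1+x)`. -/
noncomputable def psi (x : ℝ) : ℝ := x * (1 + x)

/-- The differential operator `D̃ f = ψ f''`. -/
noncomputable def Dt (f : ℝ → ℝ) : ℝ → ℝ := fun x => psi x * deriv (deriv f) x

/-- The functionals `v_{n,k}`. -/
noncomputable def v (n k : ℕ) (f : ℝ → ℝ) : ℝ :=
  if k = 0 then f 0
  else ((n : ℝ) + 1) * ∫ t in Set.Ioi (0 : ℝ), P (n + 2) ((k : ℤ) - 1) t * f t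

/-- The Goodman–Sharma–Baskakov operator `V_n`. -/
noncomputable def V (n : ℕ) (f : ℝ → ℝ) (x : ℝ) : ℝ :=
  ∑' k : ℕ, v n k f * P n (k : ℤ) x

/-- The modified operator `Ṽ_n`. -/
noncomputable def Vt (n : ℕ) (f : ℝ → ℝ) (x : ℝ) : ℝ :=
  ∑' k : ℕ, v n k f * (P n (k : ℤ) x - (1 / (n : ℝ)) * Dt (P n (k : ℤ)) x)

/-- Supremum norm on `[0,∞)`. -/
noncomputable def supNorm (f : ℝ → ℝ) : ℝ := ⨆ x ∈ Set.Ici (0 : ℝ), |f x|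

/-- `f` is bounded and continuous on `[0,∞)`. -/
def BddContOn (f : ℝ → ℝ) : Prop :=
  ContinuousOn f (Set.Ici 0) ∧ ∃ M, ∀ x ∈ Set.Ici (0 : ℝ), |f x| ≤ M

/-- The space `W²(ψ)`: `g, g'` (locally) differentiable on `(0,∞)` and `D̃ g` bounded. -/
def MemW2 (g : ℝ → ℝ) : Prop :=
  DifferentiableOn ℝ g (Set.Ioi 0) ∧ DifferentiableOn ℝ (deriv g) (Set.Ioi 0) ∧
    ∃ M, ∀ x ∈ Set.Ioi (0 : ℝ), |Dt g x| ≤ M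

/-- The space `W²₀(ψ)`: members of `W²(ψ)` with `D̃ g(x) → 0` as `x → 0⁺`. -/
def MemW20 (g : ℝ → ℝ) : Prop :=
  MemW2 g ∧ Filter.Tendsto (Dt g) (nhdsWithin 0 (Set.Ioi 0)) (nhds 0)

/-- The K-functional `K(f,t)`. -/
noncomputable def Kfun (f : ℝ → ℝ) (t : ℝ) : ℝ :=
  sInf {a : ℝ | ∃ g : ℝ → ℝ, MemW20 g ∧ MemW2 (Dt g) ∧
    a = supNorm (fun x => f x - g x) + t * supNorm (Dt (Dt g))}

/-- The function `T_{n,k}(x)`. -/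
noncomputable def T (n : ℕ) (k : ℤ) (x : ℝ) : ℝ :=
  (k : ℝ) * ((k : ℝ) - 1) * (1 + x) / x - 2 * (k : ℝ) * ((n : ℝ) + (k : ℝ))
    + ((n : ℝ) + (k : ℝ)) * ((n : ℝ) + (k : ℝ) + 1) * x / (1 + x)
/-!
`T_{n,k} P_{n,k}` is a three-term combination of `P_{n,k-1}, P_{n,k}, P_{n,k+1}`: the index
shifts `k (1+x)/x · P_{n,k} = (n+k-1) P_{n,k-1}` and `(n+k) x/(1+x) · P_{n,k} = (k+1) P_{n,k+1}`
(both from `(k+1) C(n+k, k+1) = (n+k) C(n+k-1, k)`) absorb the two rational factors of `T_{n,k}`.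
Thanks to the convention `P_{n,k} = 0` for `k < 0`, these hold for every `k : ℤ`, so adding the
combinations at `k - 1` and `k` gives the identity with no case distinction.
-/

lemma P_of_neg (n : ℕ) {k : ℤ} (hk : k < 0) (x : ℝ) : P n k x = 0 := if_pos hk

lemma P_natCast (n j : ℕ) (x : ℝ) :
    P n j x = ((n + j - 1).choose j : ℝ) * x ^ j * (1 + x) ^ (-(n : ℤ) - j) := by
  simp [P]

lemma P_raise (n : ℕ) (k : ℤ) {x : ℝ} (hx : 0 < x) :
    ((n + 1 : ℕ) + (k : ℝ)) * (x / (1 + x)) * P (n + 1) k x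
      = ((k : ℝ) + 1) * P (n + 1) (k + 1) x := by
  rcases lt_or_ge k 0 with hk | hk
  · rw [P_of_neg _ hk]
    rcases lt_or_eq_of_le (show k + 1 ≤ 0 by omega) with hk' | hk'
    · rw [P_of_neg _ hk']; ring
    · rw [show (k : ℝ) + 1 = 0 by exact_mod_cast hk']; ring
  · lift k to ℕ using hk
    have hbinom : ((n : ℝ) + k + 1) * ((n + k).choose k : ℝ)
        = ((n + k + 1).choose (k + 1) : ℝ) * ((k : ℝ) + 1) := by
      exact_mod_cast Nat.add_one_mul_choose_eq (n + k) k
    have hx1 : (1 + x) ≠ 0 := by positivity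
    rw [show (k : ℤ) + 1 = ((k + 1 : ℕ) : ℤ) by push_cast; ring, P_natCast, P_natCast,
      show n + 1 + k - 1 = n + k by omega, show n + 1 + (k + 1) - 1 = n + k + 1 by omega,
      show -((n + 1 : ℕ) : ℤ) - (k : ℤ) = (-((n + 1 : ℕ) : ℤ) - ((k + 1 : ℕ) : ℤ)) + 1 by
        push_cast; ring,
      zpow_add_one₀ hx1]
    set w := (1 + x) ^ (-((n + 1 : ℕ) : ℤ) - ((k + 1 : ℕ) : ℤ))
    field_simp
    push_cast
    linear_combination x ^ (k + 1) * w * hbinom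

lemma P_lower (n : ℕ) (k : ℤ) {x : ℝ} (hx : 0 < x) :
    (k : ℝ) * ((1 + x) / x) * P (n + 1) k x
      = ((n + 1 : ℕ) + (k : ℝ) - 1) * P (n + 1) (k - 1) x := by
  have h := P_raise n (k - 1) hx
  rw [sub_add_cancel] at h
  push_cast at h ⊢
  field_simp at h ⊢
  linear_combination (-1 : ℝ) * h

lemma T_mul_P (n : ℕ) (k : ℤ) {x : ℝ} (hx : 0 < x) :
    T (n + 1) k x * P (n + 1) k x
      = ((k : ℝ) - 1) * ((n + 1 : ℕ) + (k : ℝ) - 1) * P (n + 1) (k - 1) x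
        - 2 * (k : ℝ) * ((n + 1 : ℕ) + (k : ℝ)) * P (n + 1) k x
        + ((k : ℝ) + 1) * ((n + 1 : ℕ) + (k : ℝ) + 1) * P (n + 1) (k + 1) x := by
  rw [T]
  linear_combination ((k : ℝ) - 1) * P_lower n k hx
    + ((n + 1 : ℕ) + (k : ℝ) + 1) * P_raise n k hx

theorem TP_sum_identity_general (n : ℕ) (k : ℕ) (x : ℝ) (hx : 0 < x) :
    T (n + 1) ((k : ℤ) - 1) x * P (n + 1) ((k : ℤ) - 1) x
        + T (n + 1) (k : ℤ) x * P (n + 1) (k : ℤ) x =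
      ((k : ℝ) - 2) * ((n : ℝ) + (k : ℝ) - 1) * P (n + 1) ((k : ℤ) - 2) x
        - ((k : ℝ) - 1) * ((n : ℝ) + (k : ℝ)) * P (n + 1) ((k : ℤ) - 1) x
        - (k : ℝ) * ((n : ℝ) + (k : ℝ) + 1) * P (n + 1) (k : ℤ) x
        + ((k : ℝ) + 1) * ((n : ℝ) + (k : ℝ) + 2) * P (n + 1) ((k : ℤ) + 1) x := by
  have hprev := T_mul_P n ((k : ℤ) - 1) hx
  have hcur := T_mul_P n (k : ℤ) hx
  rw [show (k : ℤ) - 1 - 1 = k - 2 by ring, sub_add_cancel] at hprev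
  push_cast at hprev hcur
  linear_combination hprev + hcur

theorem TP_sum_identity (n : ℕ) (hn : 1 ≤ n) (k : ℕ) (x : ℝ) (hx : 0 < x) :
    T (n + 1) ((k : ℤ) - 1) x * P (n + 1) ((k : ℤ) - 1) x
        + T (n + 1) (k : ℤ) x * P (n + 1) (k : ℤ) x =
      ((k : ℝ) - 2) * ((n : ℝ) + (k : ℝ) - 1) * P (n + 1) ((k : ℤ) - 2) x
        - ((k : ℝ) - 1) * ((n : ℝ) + (k : ℝ)) * P (n + 1) ((k : ℤ) - 1) x
        - (k : ℝ) * ((n : ℝ) + (k : ℝ) + 1) * P (n + 1) (k : ℤ) x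
        + ((k : ℝ) + 1) * ((n : ℝ) + (k : ℝ) + 2) * P (n + 1) ((k : ℤ) + 1) x :=
  TP_sum_identity_general n k x hx
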